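/- If U is concave and continuous on the space of a-variables, then the value function Φ_U is continuous at every capacity matrix C with C(i,j) > 0 for all i,j ∈ V (i.e. at every interior point of the nonnegative orthant of capacity matrices). -/

import Mathlib

open Finset

noncomputable section

/-- Net outflow of commodity `k` at node `i` for flow `r`. -/
def mcfOut {N : ℕ} (A : Finset (Fin N)) (r : Fin N → Fin N → A → ℝ) (k : A) (i : Fin N) : ℝ :=
  (∑ j, r i j k) - (∑ j, r j i k)

/-- Feasible set of the multi-commodity flow problem with capacity matrix `C`. -/
def mcfFeas {N : ℕ} (A : Finset (Fin N)) (S : A → Finset A) (C : Fin N → Fin N → ℝ) :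
    Set ((Fin N → Fin N → A → ℝ) × (A → A → ℝ)) :=
  { p | (∀ i j k, 0 ≤ p.1 i j k ∧ p.1 i j k ≤ 1) ∧
        (∀ i k, 0 ≤ p.2 i k) ∧
        (∀ (k : A) (i : A), i ∈ S k → p.2 i k ≤ mcfOut A p.1 k i) ∧
        (∀ (k : A) (i : Fin N), i ∉ A → mcfOut A p.1 k i = 0) ∧
        (∀ i j, ∑ k, p.1 i j k ≤ C i j) }

/-- Value function `Φ_U(C)` of the multi-commodity flow problem. -/
def mcfValue {N : ℕ} (A : Finset (Fin N)) (S : A → Finset A)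
    (U : (A → A → ℝ) → ℝ) (C : Fin N → Fin N → ℝ) : ℝ :=
  sSup ((fun p => U p.2) '' mcfFeas A S C)

/-!
`C ↦ F(C)` has convex graph and `U` is concave, so `Φ_U` is concave on the orthant `C ≥ 0` as long
as it is finite there, and a finite concave function on a finite-dimensional space is continuous
on the interior of its domain.

Allocations vanishing on source coordinates are met by the zero flow, hence feasible for every
`C ≥ 0`. If `U` is bounded above by `M` on them, it is bounded on every `F(C)`: for feasible `a`,
let `c` be its restriction to source coordinates; then `0 ≤ c ≤ N` and the midpoint of `a` and `-c`
needs no flow, so `U a ≤ 2M - min_{[-N, 0]} U`. If `U` is unbounded on them, `Φ_U(C)` for `C ≥ 0`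
is the junk value `sSup = 0` of an unbounded set, which is concave too.
-/

section ConcaveSup

open scoped Pointwise

variable {E P : Type*} [AddCommGroup E] [Module ℝ E] [AddCommGroup P] [Module ℝ P]

theorem ConcaveOn.sSup_image_of_convex_graph {s : Set E} {F : E → Set P} {g : P → ℝ}
    (hs : Convex ℝ s) (hF : Convex ℝ {z : E × P | z.2 ∈ F z.1}) (hg : ConcaveOn ℝ Set.univ g)
    (hne : ∀ x ∈ s, (F x).Nonempty) (hbdd : ∀ x ∈ s, BddAbove (g '' F x)) :
    ConcaveOn ℝ s fun x => sSup (g '' F x) := by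
  refine ⟨hs, fun x hx y hy t u ht hu htu => ?_⟩
  have hle : ∀ v ∈ t • g '' F x + u • g '' F y, v ≤ sSup (g '' F (t • x + u • y)) := by
    rintro _ ⟨_, ⟨_, ⟨p, hp, rfl⟩, rfl⟩, _, ⟨_, ⟨q, hq, rfl⟩, rfl⟩, rfl⟩
    have hpq : t • p + u • q ∈ F (t • x + u • y) :=
      hF (show (x, p).2 ∈ F (x, p).1 from hp) (show (y, q).2 ∈ F (y, q).1 from hq) ht hu htu
    exact (hg.2 trivial trivial ht hu htu).trans
      (le_csSup (hbdd _ (hs hx hy ht hu htu)) ⟨_, hpq, rfl⟩)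
  have hx' := (hne x hx).image g
  have hy' := (hne y hy).image g
  calc t • sSup (g '' F x) + u • sSup (g '' F y)
      = sSup (t • g '' F x + u • g '' F y) := by
        rw [csSup_add (hx'.smul_set) ((hbdd x hx).smul_of_nonneg ht) (hy'.smul_set)
          ((hbdd y hy).smul_of_nonneg hu), Real.sSup_smul_of_nonneg ht,
          Real.sSup_smul_of_nonneg hu]
    _ ≤ sSup (g '' F (t • x + u • y)) := csSup_le (hx'.smul_set.add hy'.smul_set) hle

end ConcaveSup

section Mcf

variable {N : ℕ} (A : Finset (Fin N)) (S : A → Finset A)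

theorem mcfOut_add (r r' : Fin N → Fin N → A → ℝ) (k : A) (i : Fin N) :
    mcfOut A (r + r') k i = mcfOut A r k i + mcfOut A r' k i := by
  simp only [mcfOut, Pi.add_apply, sum_add_distrib]
  ring

theorem mcfOut_smul (c : ℝ) (r : Fin N → Fin N → A → ℝ) (k : A) (i : Fin N) :
    mcfOut A (c • r) k i = c * mcfOut A r k i := by
  simp only [mcfOut, Pi.smul_apply, smul_eq_mul, ← mul_sum, mul_sub]

theorem mcfOut_le_card {r : Fin N → Fin N → A → ℝ} (hr : ∀ i j k, 0 ≤ r i j k ∧ r i j k ≤ 1)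
    (k : A) (i : Fin N) : mcfOut A r k i ≤ N := by
  have hout : ∑ j, r i j k ≤ N := by
    simpa using sum_le_sum fun j (_ : j ∈ univ) => (hr i j k).2
  have hin : 0 ≤ ∑ j, r j i k := sum_nonneg fun j _ => (hr j i k).1
  rw [mcfOut]
  linarith

theorem convex_mcfFeas_graph :
    Convex ℝ {z : (Fin N → Fin N → ℝ) × _ | z.2 ∈ mcfFeas A S z.1} := by
  rintro ⟨C, r, a⟩ ⟨hr, ha, hs, hi, hc⟩ ⟨C', r', a'⟩ ⟨hr', ha', hs', hi', hc'⟩ t u ht hu htu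
  simp only [Prod.smul_mk, Prod.mk_add_mk]
  refine ⟨fun i j k => convex_Icc 0 1 (hr i j k) (hr' i j k) ht hu htu,
    fun i k => convex_Ici (0 : ℝ) (ha i k) (ha' i k) ht hu htu,
    fun k i hik => ?_, fun k i hi0 => ?_, fun i j => ?_⟩
  · simp only [mcfOut_add, mcfOut_smul, Pi.add_apply, Pi.smul_apply, smul_eq_mul]
    exact add_le_add (mul_le_mul_of_nonneg_left (hs k i hik) ht)
      (mul_le_mul_of_nonneg_left (hs' k i hik) hu)
  · simp only [mcfOut_add, mcfOut_smul, hi k i hi0, hi' k i hi0, mul_zero, add_zero]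
  · simp only [Pi.add_apply, Pi.smul_apply, smul_eq_mul, sum_add_distrib, ← mul_sum]
    exact add_le_add (mul_le_mul_of_nonneg_left (hc i j) ht)
      (mul_le_mul_of_nonneg_left (hc' i j) hu)

def mcfZeroFlowAlloc : Set (A → A → ℝ) :=
  {a | ∀ i k, 0 ≤ a i k ∧ (i ∈ S k → a i k = 0)}

variable {A S}

theorem zero_mem_mcfFeas {C : Fin N → Fin N → ℝ} (hC : 0 ≤ C) {a : A → A → ℝ}
    (ha : a ∈ mcfZeroFlowAlloc A S) : ((0, a) : (Fin N → Fin N → A → ℝ) × _) ∈ mcfFeas A S C := by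
  refine ⟨fun _ _ _ => ⟨le_rfl, zero_le_one⟩, fun i k => (ha i k).1, fun k i hik => ?_,
    fun _ _ _ => by simp [mcfOut], fun i j => by simpa using hC i j⟩
  simp [mcfOut, (ha i k).2 hik]

theorem mcfValue_eq_zero_of_not_bddAbove {U : (A → A → ℝ) → ℝ}
    (hU : ¬BddAbove (U '' mcfZeroFlowAlloc A S)) {C : Fin N → Fin N → ℝ} (hC : 0 ≤ C) :
    mcfValue A S U C = 0 := by
  refine Real.sSup_of_not_bddAbove fun hbdd => hU (hbdd.mono ?_)
  rintro _ ⟨a, ha, rfl⟩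
  exact ⟨(0, a), zero_mem_mcfFeas hC ha, rfl⟩

theorem bddAbove_utility_mcfFeas {U : (A → A → ℝ) → ℝ} (hUconc : ConcaveOn ℝ Set.univ U)
    (hUcont : Continuous U) (hU : BddAbove (U '' mcfZeroFlowAlloc A S)) (C : Fin N → Fin N → ℝ) :
    BddAbove ((fun p => U p.2) '' mcfFeas A S C) := by
  obtain ⟨M, hM⟩ := hU
  set box := Set.Icc (fun _ _ => -(N : ℝ)) (0 : A → A → ℝ)
  obtain ⟨m, hm⟩ := isCompact_Icc.bddBelow_image (K := box) hUcont.continuousOn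
  refine ⟨2 * M - m, ?_⟩
  rintro _ ⟨⟨r, a⟩, ⟨hr, ha, hs, -, -⟩, rfl⟩
  set c : A → A → ℝ := fun i k => if i ∈ S k then a i k else 0
  have hc_box : -c ∈ box := by
    refine ⟨fun i k => ?_, fun i k => ?_⟩ <;> by_cases hik : i ∈ S k <;> simp [c, hik, ha i k]
    exact (hs k i hik).trans (mcfOut_le_card A hr k i)
  have hmid : (1 / 2 : ℝ) • a + (1 / 2 : ℝ) • -c ∈ mcfZeroFlowAlloc A S := by
    intro i k
    by_cases hik : i ∈ S k
    · simp [c, hik]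
    · simpa [c, hik] using ha i k
  have hconc := hUconc.2 (Set.mem_univ a) (Set.mem_univ (-c)) (by norm_num : (0 : ℝ) ≤ 1 / 2)
    (by norm_num : (0 : ℝ) ≤ 1 / 2) (by norm_num)
  have hUmid := hM ⟨_, hmid, rfl⟩
  have hUc := hm ⟨_, hc_box, rfl⟩
  simp only [smul_eq_mul] at hconc
  linarith

theorem mcfValue_concaveOn {U : (A → A → ℝ) → ℝ} (hUconc : ConcaveOn ℝ Set.univ U)
    (hUcont : Continuous U) : ConcaveOn ℝ (Set.Ici 0) (mcfValue A S U) := by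
  by_cases hU : BddAbove (U '' mcfZeroFlowAlloc A S)
  · exact ConcaveOn.sSup_image_of_convex_graph (F := mcfFeas A S) (g := fun p => U p.2)
      (convex_Ici 0) (convex_mcfFeas_graph A S) (hUconc.comp_linearMap (LinearMap.snd ℝ _ _))
      (fun C hC => ⟨_, zero_mem_mcfFeas (a := 0) hC fun _ _ => ⟨le_rfl, fun _ => rfl⟩⟩)
      (fun C _ => bddAbove_utility_mcfFeas hUconc hUcont hU C)
  · exact (concaveOn_const 0 (convex_Ici 0)).congr fun C hC =>
      (mcfValue_eq_zero_of_not_bddAbove hU hC).symm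

end Mcf

theorem mem_interior_Ici_zero_of_pos {ι κ : Type*} [Finite ι] [Finite κ] {C : ι → κ → ℝ}
    (hC : ∀ i j, 0 < C i j) :
    C ∈ interior (Set.Ici 0) := by
  rw [mem_interior_iff_mem_nhds, ← Set.pi_univ_Ici]
  refine set_pi_mem_nhds Set.finite_univ fun i _ => ?_
  rw [← Set.pi_univ_Ici]
  exact set_pi_mem_nhds Set.finite_univ fun j _ => Ici_mem_nhds (hC i j)

theorem mcfValue_continuousAt_general {N : ℕ}
    (A : Finset (Fin N))
    (S : A → Finset A)
    (U : (A → A → ℝ) → ℝ) (hUconc : ConcaveOn ℝ Set.univ U) (hUcont : Continuous U)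
    (C : Fin N → Fin N → ℝ) (hC : ∀ i j, 0 < C i j) :
    ContinuousAt (mcfValue A S U) C :=
  (mcfValue_concaveOn hUconc hUcont).continuousOn_interior.continuousAt
    (isOpen_interior.mem_nhds (mem_interior_Ici_zero_of_pos hC))

/-- If `U` is concave and continuous, then the value function `Φ_U` is continuous
at every capacity matrix with strictly positive entries. -/
theorem mcfValue_continuousAt {N K : ℕ} (hN : 0 < N) (hK : 0 < K)
    (A : Finset (Fin N)) (hA : A.card = K)
    (S : A → Finset A) (hS : ∀ k, (S k).Nonempty)
    (U : (A → A → ℝ) → ℝ) (hUconc : ConcaveOn ℝ Set.univ U) (hUcont : Continuous U)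
    (C : Fin N → Fin N → ℝ) (hC : ∀ i j, 0 < C i j) :
    ContinuousAt (mcfValue A S U) C :=
  mcfValue_continuousAt_general A S U hUconc hUcont C hC
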